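/- arXiv:2601.15568 — 4 statements merged into one kernel-verified Lean document; each statement's English description precedes it below -/
import Mathlib

section
/- Let K be a totally real number field containing √2. If there exists a totally positive α ∈ O_K such that 2α is not a sum of four squares of elements of O_K, then none of the four quadratic forms Q₁, Q₂, Q₃, Q₃′ is universal over K: for each i ∈ {1,2,3,3′} there exists a totally positive β ∈ O_K such that no v ∈ O_K³ satisfies vᵀG_i v = β. -/
open NumberField Matrix

/-- An element of a number field is totally positive if it is positive in every
real embedding. -/
def TotallyPositive (K : Type*) [Field K] (α : K) : Prop :=
  ∀ σ : K →+* ℝ, 0 < σ α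

/-- The Gram matrices of the four ternary classical quadratic forms
`Q₁, Q₂, Q₃, Q₃′` that are universal over `ℚ(√2)`; here `s = √2`. -/
def gramList {K : Type*} [Field K] [NumberField K] (s : 𝓞 K) :
    List (Matrix (Fin 3) (Fin 3) (𝓞 K)) :=
  [ !![1, 0, 0; 0, 1, 0; 0, 0, 2 + s],
    !![1, 0, 0; 0, 2 + s, 1; 0, 1, 2 - s],
    !![1, 0, 0; 0, 2 + s, 1; 0, 1, 3],
    !![1, 0, 0; 0, 2 - s, 1; 0, 1, 3] ]

/-- If `2α` is not a sum of four squares in `𝓞 K` for some totally positive `α`,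
then none of the four forms `Q₁, Q₂, Q₃, Q₃′` is universal over `K ∋ √2`. -/
theorem not_universal_of_two_not_sum_four_squares
    (K : Type*) [Field K] [NumberField K]
    (hTR : ∀ φ : K →+* ℂ, ∀ x : K, (φ x).im = 0)
    (s : 𝓞 K) (hspos : TotallyPositive K (s : K)) (hs : s ^ 2 = 2)
    (h : ∃ α : 𝓞 K, TotallyPositive K (α : K) ∧
      ¬ ∃ a b c d : 𝓞 K, 2 * α = a ^ 2 + b ^ 2 + c ^ 2 + d ^ 2) :
    ∀ G ∈ gramList s, ∃ β : 𝓞 K, TotallyPositive K (β : K) ∧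
      ∀ v : Fin 3 → 𝓞 K, v ⬝ᵥ G.mulVec v ≠ β := by
  
  obtain ⟨α, hα, hns⟩ := h
  intro G hG
  refine ⟨α, hα, fun v hv => hns ?_⟩
  simp only [gramList, List.mem_cons, List.not_mem_nil, or_false] at hG
  rcases hG with rfl | rfl | rfl | rfl <;>
    simp [dotProduct, Matrix.mulVec, Fin.sum_univ_three,
      Matrix.vecHead, Matrix.vecTail] at hv
  · exact ⟨v 0 + v 1, v 0 - v 1, (1 + s) * v 2, v 2, by
      linear_combination -2 * hv - (v 2) ^ 2 * hs⟩
  · exact ⟨v 0, v 0, (s + 1) * v 1 + v 2, v 1 + (1 - s) * v 2, by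
      linear_combination -2 * hv - ((v 1)^2 + (v 2)^2) * hs⟩
  · exact ⟨v 0 + v 2, v 0 - v 2, (s + 1) * v 1, v 1 + 2 * v 2, by
      linear_combination -2 * hv - (v 1)^2 * hs⟩
  · exact ⟨v 0 + v 2, v 0 - v 2, (s - 1) * v 1, v 1 + 2 * v 2, by
      linear_combination -2 * hv - (v 1)^2 * hs⟩
end

section
/- Let K be a totally real number field in which every totally positive unit of O_K is the square of a unit. Then for every nonzero α ∈ O_K that is not a unit, there exist a unit μ of O_K, an element β ∈ O_K⁺ that is not the square of any element of O_K, and an integer j ≥ 0 such that α = μ·β^(2^j). Moreover, if α is totally positive and indecomposable, then β can additionally be chosen to be indecomposable. -/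
open NumberField

/-- A totally positive integer is indecomposable if it is not a sum of two totally
positive integers. -/
def Indecomposable (K : Type*) [Field K] [NumberField K] (α : 𝓞 K) : Prop :=
  ¬ ∃ β γ : 𝓞 K, TotallyPositive K (β : K) ∧ TotallyPositive K (γ : K) ∧ α = β + γ

section Aux

variable {K : Type*} [Field K] [NumberField K]

/-- sign of a real number as element of ZMod 2 -/
noncomputable def rsgn (a : ℝ) : ZMod 2 := if 0 < a then 0 else 1

lemma rsgn_mul {a b : ℝ} (ha : a ≠ 0) (hb : b ≠ 0) :
    rsgn (a * b) = rsgn a + rsgn b := by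
  rcases ha.lt_or_gt with ha' | ha' <;> rcases hb.lt_or_gt with hb' | hb' <;>
    simp [rsgn, mul_pos, mul_pos_of_neg_of_neg, mul_neg_of_neg_of_pos, mul_neg_of_pos_of_neg,
      ha', hb', not_lt.mpr, le_of_lt, ha'.not_gt, hb'.not_gt] <;> decide

/-- the sign vector of a unit -/
noncomputable def usgn (u : (𝓞 K)ˣ) : (K →+* ℝ) → ZMod 2 :=
  fun σ => rsgn (σ ((u : 𝓞 K) : K))

lemma unit_coe_ne_zero (u : (𝓞 K)ˣ) (σ : K →+* ℝ) : σ ((u : 𝓞 K) : K) ≠ 0 := by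
  have h1 : ((u : 𝓞 K) : K) ≠ 0 := by
    simpa using (RingOfIntegers.coe_ne_zero_iff (K := K)).mpr u.ne_zero
  exact fun h => h1 (by simpa using (map_eq_zero σ).mp h)

lemma usgn_mul (u w : (𝓞 K)ˣ) : usgn (u * w) = usgn u + usgn w := by
  funext σ
  have : ((((u * w) : (𝓞 K)ˣ) : 𝓞 K) : K) = ((u : 𝓞 K) : K) * ((w : 𝓞 K) : K) := by
    push_cast; ring
  simp only [usgn, this, map_mul, Pi.add_apply]
  exact rsgn_mul (unit_coe_ne_zero u σ) (unit_coe_ne_zero w σ)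

lemma usgn_one : usgn (K := K) 1 = 0 := by
  funext σ; simp [usgn, rsgn]

lemma usgn_pow (u : (𝓞 K)ˣ) (n : ℕ) : usgn (u ^ n) = n • usgn u := by
  induction n with
  | zero => simpa using usgn_one
  | succ n ih => rw [pow_succ, usgn_mul, ih, succ_nsmul]

lemma usgn_prod {ι : Type*} (s : Finset ι) (f : ι → (𝓞 K)ˣ) :
    usgn (∏ i ∈ s, f i) = ∑ i ∈ s, usgn (f i) := by
  classical
  induction s using Finset.induction with
  | empty => simpa using usgn_one
  | insert _ _ h ih => rw [Finset.prod_insert h, Finset.sum_insert h, usgn_mul, ih]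

lemma usgn_eq_zero_iff (u : (𝓞 K)ˣ) :
    usgn u = 0 ↔ TotallyPositive K ((u : 𝓞 K) : K) := by
  constructor
  · intro h σ
    have := congrFun h σ
    simp only [usgn, rsgn, Pi.zero_apply] at this
    by_contra hneg
    rw [if_neg hneg] at this
    exact one_ne_zero this
  · intro h; funext σ; simp [usgn, rsgn, h σ]

end Aux

section Card

variable {K : Type*} [Field K] [NumberField K]

lemma allEmbReal (hTR : ∀ φ : K →+* ℂ, ∀ x : K, (φ x).im = 0) (φ : K →+* ℂ) :
    NumberField.ComplexEmbedding.IsReal φ :=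
  NumberField.ComplexEmbedding.isReal_iff.mpr (by
    ext x
    simp [NumberField.ComplexEmbedding.conjugate, RingHom.star_def,
      Complex.conj_eq_iff_im, hTR φ x])

/-- Real and complex embeddings coincide for a totally real field. -/
noncomputable def realEmbEquiv (hTR : ∀ φ : K →+* ℂ, ∀ x : K, (φ x).im = 0) :
    (K →+* ℝ) ≃ (K →+* ℂ) where
  toFun ψ := Complex.ofRealHom.comp ψ
  invFun φ := (allEmbReal hTR φ).embedding
  left_inv ψ := by
    ext x
    apply Complex.ofReal_injective
    rw [NumberField.ComplexEmbedding.IsReal.coe_embedding_apply]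
    rfl
  right_inv φ := by
    ext x
    exact NumberField.ComplexEmbedding.IsReal.coe_embedding_apply (allEmbReal hTR φ) x

lemma card_real_emb (hTR : ∀ φ : K →+* ℂ, ∀ x : K, (φ x).im = 0) :
    Nat.card (K →+* ℝ) = Units.rank K + 1 := by
  classical
  have h1 : Nat.card (K →+* ℝ) = Nat.card (K →+* ℂ) := Nat.card_congr (realEmbEquiv hTR)
  have h2 : Fintype.card (K →+* ℂ) = Module.finrank ℚ K := Embeddings.card K ℂ
  have hcompl : Fintype.card { φ : K →+* ℂ // ¬ComplexEmbedding.IsReal φ } = 0 := by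
    rw [Fintype.card_eq_zero_iff]
    exact ⟨fun ⟨φ, hφ⟩ => hφ (allEmbReal hTR φ)⟩
  have h3 : InfinitePlace.nrComplexPlaces K = 0 := by
    have := InfinitePlace.card_complex_embeddings K
    omega
  have h4 : InfinitePlace.nrRealPlaces K = Module.finrank ℚ K := by
    have := InfinitePlace.card_add_two_mul_card_eq_rank K
    omega
  have h5 : Fintype.card (InfinitePlace K) = Module.finrank ℚ K := by
    rw [InfinitePlace.card_eq_nrRealPlaces_add_nrComplexPlaces, h3, h4]
    omega
  have h6 : 0 < Fintype.card (InfinitePlace K) := Fintype.card_pos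
  rw [h1, Nat.card_eq_fintype_card, h2, Units.rank, h5]
  omega

end Card

section Surj

variable {K : Type*} [Field K] [NumberField K]

lemma usgn_surjective (hTR : ∀ φ : K →+* ℂ, ∀ x : K, (φ x).im = 0)
    (hU : ∀ u : (𝓞 K)ˣ, TotallyPositive K ((u : 𝓞 K) : K) → ∃ v : (𝓞 K)ˣ, u = v ^ 2) :
    Function.Surjective (usgn (K := K)) := by
  classical
  letI : Fintype (K →+* ℝ) := Fintype.ofEquiv _ (realEmbEquiv hTR).symm
  set r := Units.rank K with hr
  have hcardemb : Fintype.card (K →+* ℝ) = r + 1 := by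
    rw [← Nat.card_eq_fintype_card]; exact card_real_emb hTR
  have hne : Nonempty (K →+* ℝ) := by
    rw [← Fintype.card_pos_iff, hcardemb]; omega
  let u : Option (Fin r) → (𝓞 K)ˣ := fun x => Option.elim x (-1) (Units.fundSystem K)
  let v : Option (Fin r) → ((K →+* ℝ) → ZMod 2) := fun x => usgn (u x)
  have hneg1 : (-1 : (𝓞 K)ˣ) ∈ Units.torsion K := by
    rw [Units.torsion, CommGroup.mem_torsion, isOfFinOrder_iff_pow_eq_one]
    exact ⟨2, two_pos, by rw [sq]; simp⟩
  have husgn_neg1 : ∀ σ : K →+* ℝ, σ ((((-1 : (𝓞 K)ˣ) : 𝓞 K)) : K) = -1 := by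
    intro σ; push_cast; simp
  have hindep : LinearIndependent (ZMod 2) v := by
    rw [Fintype.linearIndependent_iff]
    intro c hc
    set e : Option (Fin r) → ℕ := fun x => (c x).val with he
    have helt : ∀ x, e x < 2 := fun x => ZMod.val_lt (c x)
    have hce : ∀ x, ((e x : ZMod 2)) = c x := fun x => ZMod.natCast_rightInverse (c x)
    set U0 : (𝓞 K)ˣ := ∏ x, u x ^ e x with hU0
    have hg : usgn U0 = 0 := by
      rw [hU0, usgn_prod]
      calc ∑ x, usgn (u x ^ e x) = ∑ x, c x • v x := by
            refine Finset.sum_congr rfl fun x _ => ?_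
            rw [usgn_pow, ← hce x, Nat.cast_smul_eq_nsmul]
      _ = 0 := hc
    obtain ⟨w, hw⟩ := hU U0 ((usgn_eq_zero_iff U0).mp hg)
    -- decompose U0 in two ways
    have hU0eq : U0 = (-1) ^ e none * ∏ i, Units.fundSystem K i ^ ((e (some i) : ℤ)) := by
      rw [hU0, Fintype.prod_option]
      have : ∀ i : Fin r, u (some i) ^ e (some i)
          = Units.fundSystem K i ^ ((e (some i) : ℤ)) := by
        intro i; rw [zpow_natCast]; rfl
      simp_rw [this]
      rfl
    have h₁ := Units.fun_eq_repr K (x := U0) (ζ := (-1) ^ e none)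
      (f := fun i => (e (some i) : ℤ)) (Subgroup.pow_mem _ hneg1 _) hU0eq
    obtain ⟨⟨ζ', g⟩, hwdec, -⟩ := Units.exist_unique_eq_mul_prod K w
    have hU0eq' : U0 = (ζ' : (𝓞 K)ˣ) ^ 2 * ∏ i, Units.fundSystem K i ^ (2 * g i) := by
      rw [hw, hwdec, mul_pow, ← Finset.prod_pow]
      congr 1
      refine Finset.prod_congr rfl fun i _ => ?_
      rw [← zpow_natCast (Units.fundSystem K i ^ g i) 2, ← zpow_mul, mul_comm (g i)]
      norm_num
    have h₂ := Units.fun_eq_repr K (x := U0) (ζ := (ζ' : (𝓞 K)ˣ) ^ 2)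
      (f := fun i => 2 * g i) (Subgroup.pow_mem _ ζ'.2 _) hU0eq'
    have hezero : ∀ i, e (some i) = 0 := by
      intro i
      have := (congrFun h₁ i).trans (congrFun h₂ i).symm
      have h2 := helt (some i)
      omega
    intro x
    match x with
    | some i => rw [← hce (some i), hezero i]; rfl
    | none =>
      by_contra hcn
      have hval : e none = 1 := by
        have := helt none
        have : e none ≠ 0 := fun h => hcn (by rw [← hce none, h]; rfl)
        omega
      have hU0neg : U0 = -1 := by
        rw [hU0eq, hval, pow_one]
        have : ∏ i, Units.fundSystem K i ^ ((e (some i) : ℤ)) = 1 := by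
          refine Finset.prod_eq_one fun i _ => ?_
          rw [hezero i]
          norm_num
        rw [this, mul_one]
      obtain ⟨σ⟩ := hne
      have hpos : 0 < σ (((U0 : 𝓞 K)) : K) := ((usgn_eq_zero_iff U0).mp hg) σ
      rw [hU0neg, husgn_neg1 σ] at hpos
      linarith
  have hcard : Fintype.card (Option (Fin r)) =
      Module.finrank (ZMod 2) ((K →+* ℝ) → ZMod 2) := by
    rw [Module.finrank_pi, hcardemb, Fintype.card_option, Fintype.card_fin]
  have hspan := hindep.span_eq_top_of_card_eq_finrank hcard
  intro t
  have ht : t ∈ Submodule.span (ZMod 2) (Set.range v) := by rw [hspan]; trivial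
  rw [Finsupp.mem_span_range_iff_exists_finsupp] at ht
  obtain ⟨c, hc⟩ := ht
  refine ⟨∏ x, u x ^ (c x).val, ?_⟩
  rw [usgn_prod]
  rw [Finsupp.sum_fintype] at hc
  · rw [← hc]
    refine Finset.sum_congr rfl fun x _ => ?_
    rw [usgn_pow, ← Nat.cast_smul_eq_nsmul (ZMod 2), ZMod.natCast_val, ZMod.cast_id]
  · intro i; rw [zero_smul]

end Surj

section Main

variable {K : Type*} [Field K] [NumberField K]

lemma exists_unit_mul_tp (hTR : ∀ φ : K →+* ℂ, ∀ x : K, (φ x).im = 0)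
    (hU : ∀ u : (𝓞 K)ˣ, TotallyPositive K ((u : 𝓞 K) : K) → ∃ v : (𝓞 K)ˣ, u = v ^ 2)
    (α : 𝓞 K) (hα : α ≠ 0) :
    ∃ u : (𝓞 K)ˣ, TotallyPositive K ((((u : 𝓞 K) * α : 𝓞 K)) : K) := by
  obtain ⟨u, hu⟩ := usgn_surjective hTR hU (fun σ => rsgn (σ (α : K)))
  refine ⟨u, fun σ => ?_⟩
  have hα' : σ (α : K) ≠ 0 := by
    intro h
    exact hα (by
      have : (α : K) = 0 := by simpa using (map_eq_zero σ).mp h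
      exact_mod_cast this)
  have hcoe : ((((u : 𝓞 K) * α : 𝓞 K)) : K) = ((u : 𝓞 K) : K) * (α : K) := by push_cast; ring
  rw [hcoe, map_mul]
  have hs := congrFun hu σ
  simp only [usgn] at hs
  rcases hα'.lt_or_gt with h | h
  · have : rsgn (σ (α : K)) = 1 := by simp [rsgn, h.not_gt]
    rw [this] at hs
    have hu' : σ ((u : 𝓞 K) : K) < 0 := by
      rcases (unit_coe_ne_zero u σ).lt_or_gt with h' | h'
      · exact h'
      · exfalso; rw [rsgn, if_pos h'] at hs; exact one_ne_zero hs.symm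
    exact mul_pos_of_neg_of_neg hu' h
  · have : rsgn (σ (α : K)) = 0 := by simp [rsgn, h]
    rw [this] at hs
    have hu' : 0 < σ ((u : 𝓞 K) : K) := by
      by_contra h'
      rw [rsgn, if_neg h'] at hs; exact one_ne_zero hs
    exact mul_pos hu' h

lemma unsquaring_part1 (hTR : ∀ φ : K →+* ℂ, ∀ x : K, (φ x).im = 0)
    (hU : ∀ u : (𝓞 K)ˣ, TotallyPositive K ((u : 𝓞 K) : K) → ∃ v : (𝓞 K)ˣ, u = v ^ 2) :
    ∀ α : 𝓞 K, α ≠ 0 → ¬ IsUnit α →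
      ∃ (μ : (𝓞 K)ˣ) (β : 𝓞 K) (j : ℕ), TotallyPositive K (β : K) ∧
        (¬ ∃ ω : 𝓞 K, β = ω ^ 2) ∧ α = (μ : 𝓞 K) * β ^ (2 ^ j) := by
  intro α
  haveI : WfDvdMonoid (𝓞 K) := IsNoetherianRing.wfDvdMonoid
  refine WellFounded.induction (wellFounded_dvdNotUnit)
    (C := fun α => α ≠ 0 → ¬ IsUnit α →
      ∃ (μ : (𝓞 K)ˣ) (β : 𝓞 K) (j : ℕ), TotallyPositive K (β : K) ∧
        (¬ ∃ ω : 𝓞 K, β = ω ^ 2) ∧ α = (μ : 𝓞 K) * β ^ (2 ^ j)) α ?_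
  clear α
  intro α ih h0 hnu
  by_cases hsq : ∃ (u : (𝓞 K)ˣ) (ω : 𝓞 K), α = (u : 𝓞 K) * ω ^ 2
  · obtain ⟨u, ω, hαeq⟩ := hsq
    have hω0 : ω ≠ 0 := by rintro rfl; rw [hαeq] at h0; simp at h0
    have hωnu : ¬ IsUnit ω := fun h => hnu (by rw [hαeq]; exact u.isUnit.mul (h.pow 2))
    have hdvd : DvdNotUnit ω α := by
      refine ⟨hω0, (u : 𝓞 K) * ω, ?_, by rw [hαeq]; ring⟩
      intro hiu
      exact hωnu (by
        have := u⁻¹.isUnit.mul hiu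
        rwa [← mul_assoc, show ((u⁻¹ : (𝓞 K)ˣ) : 𝓞 K) * (u : 𝓞 K) = 1 from u.inv_mul,
          one_mul] at this)
    obtain ⟨μ', β, j, htp, hns, hωeq⟩ := ih ω hdvd hω0 hωnu
    refine ⟨u * μ' ^ 2, β, j + 1, htp, hns, ?_⟩
    rw [hαeq, hωeq]
    rw [mul_pow, ← pow_mul, ← pow_succ]
    push_cast
    ring
  · obtain ⟨u, hu⟩ := exists_unit_mul_tp hTR hU α h0
    refine ⟨u⁻¹, (u : 𝓞 K) * α, 0, hu, ?_, ?_⟩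
    · rintro ⟨ω, hω⟩
      exact hsq ⟨u⁻¹, ω, by
        rw [← hω, ← mul_assoc, show ((u⁻¹ : (𝓞 K)ˣ) : 𝓞 K) * (u : 𝓞 K) = 1 from u.inv_mul,
          one_mul]⟩
    · rw [pow_zero, pow_one, ← mul_assoc,
        show ((u⁻¹ : (𝓞 K)ˣ) : 𝓞 K) * (u : 𝓞 K) = 1 from u.inv_mul, one_mul]

end Main


/-- "Unsquaring": in a totally real field where all totally positive units are squares
of units, every nonzero nonunit `α` can be written as `μ · β^(2^j)` with `μ` a unit and
`β` a totally positive nonsquare; if `α` is totally positive and indecomposable, `β`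
can moreover be chosen indecomposable. -/
theorem unsquaring
    (K : Type*) [Field K] [NumberField K]
    (hTR : ∀ φ : K →+* ℂ, ∀ x : K, (φ x).im = 0)
    (hU : ∀ u : (𝓞 K)ˣ, TotallyPositive K ((u : 𝓞 K) : K) → ∃ v : (𝓞 K)ˣ, u = v ^ 2) :
    ∀ α : 𝓞 K, α ≠ 0 → ¬ IsUnit α →
      (∃ (μ : (𝓞 K)ˣ) (β : 𝓞 K) (j : ℕ), TotallyPositive K (β : K) ∧
        (¬ ∃ ω : 𝓞 K, β = ω ^ 2) ∧ α = (μ : 𝓞 K) * β ^ (2 ^ j)) ∧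
      (TotallyPositive K (α : K) → Indecomposable K α →
        ∃ (μ : (𝓞 K)ˣ) (β : 𝓞 K) (j : ℕ), TotallyPositive K (β : K) ∧
          (¬ ∃ ω : 𝓞 K, β = ω ^ 2) ∧ Indecomposable K β ∧
          α = (μ : 𝓞 K) * β ^ (2 ^ j)) := by
  intro α h0 hnu
  obtain ⟨μ, β, j, htp, hns, heq⟩ := unsquaring_part1 hTR hU α h0 hnu
  refine ⟨⟨μ, β, j, htp, hns, heq⟩, fun hTPα hInd => ⟨μ, β, j, htp, hns, ?_, heq⟩⟩
  rintro ⟨β₁, β₂, h1, h2, hb⟩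
  have hμpos : ∀ σ : K →+* ℝ, 0 < σ (((μ : 𝓞 K)) : K) := by
    intro σ
    have hβσ : 0 < σ ((β : K)) ^ (2 ^ j) := pow_pos (htp σ) _
    have hα : σ ((α : 𝓞 K) : K) = σ (((μ : 𝓞 K)) : K) * σ ((β : K)) ^ (2 ^ j) := by
      rw [heq]; push_cast; rw [map_mul, map_pow]
    have hpos := hTPα σ
    rw [hα] at hpos
    rcases mul_pos_iff.mp hpos with ⟨h, _⟩ | ⟨_, h⟩
    · exact h
    · linarith
  set m := 2 ^ j - 1 with hmdef
  have hm : 2 ^ j = m + 1 := (Nat.sub_add_cancel Nat.one_le_two_pow).symm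
  have key : (μ : 𝓞 K) * β ^ m * β₁ + (μ : 𝓞 K) * β ^ m * β₂ = α := by
    rw [← mul_add, ← hb, mul_assoc, ← pow_succ, ← hm, heq]
  refine hInd ⟨(μ : 𝓞 K) * β ^ m * β₁, (μ : 𝓞 K) * β ^ m * β₂, ?_, ?_, key.symm⟩
  · intro σ
    push_cast
    rw [map_mul, map_mul, map_pow]
    exact mul_pos (mul_pos (hμpos σ) (pow_pos (htp σ) _)) (h1 σ)
  · intro σ
    push_cast
    rw [map_mul, map_mul, map_pow]
    exact mul_pos (mul_pos (hμpos σ) (pow_pos (htp σ) _)) (h2 σ)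
end

section
/- Let K be a totally real number field and let α ∈ O_K⁺ be indecomposable with α = β·τ² for some β, τ ∈ O_K. Then β is totally positive and indecomposable, and τ is s-indecomposable: there are no nonzero τ₁, τ₂ ∈ O_K having the same signature (i.e. with σ(τ₁) and σ(τ₂) of the same sign for every embedding σ : K → ℝ) such that τ = τ₁ + τ₂. -/
open NumberField

/-- If `α = β·τ²` is totally positive and indecomposable, then `β` is totally positive
and indecomposable, and `τ` is `s`-indecomposable: it is not a sum of two nonzero
integers with the same signature. -/
theorem factor_of_indecomposable
    (K : Type*) [Field K] [NumberField K]
    (hTR : ∀ φ : K →+* ℂ, ∀ x : K, (φ x).im = 0)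
    (α β τ : 𝓞 K)
    (hα : TotallyPositive K (α : K)) (hind : Indecomposable K α)
    (hfac : α = β * τ ^ 2) :
    TotallyPositive K (β : K) ∧ Indecomposable K β ∧
      ¬ ∃ τ₁ τ₂ : 𝓞 K, τ₁ ≠ 0 ∧ τ₂ ≠ 0 ∧
        (∀ σ : K →+* ℝ, (0 < σ (τ₁ : K) ↔ 0 < σ (τ₂ : K))) ∧ τ = τ₁ + τ₂ := by
  have hαval : ∀ σ : K →+* ℝ, 0 < σ (β : K) * σ (τ : K) ^ 2 := by
    intro σ
    have h := hα σ
    rw [hfac] at h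
    push_cast at h
    rwa [map_mul, map_pow] at h
  have hτ2 : ∀ σ : K →+* ℝ, 0 < σ (τ : K) ^ 2 := by
    intro σ
    have h0 : σ (τ : K) ≠ 0 := by
      intro h0
      have h := hαval σ
      rw [h0] at h
      simp at h
    positivity
  have hβ : TotallyPositive K (β : K) := by
    intro σ
    have h := hαval σ
    nlinarith [hτ2 σ]
  refine ⟨hβ, ?_, ?_⟩
  · rintro ⟨β₁, β₂, h1, h2, h3⟩
    apply hind
    refine ⟨β₁ * τ ^ 2, β₂ * τ ^ 2, ?_, ?_, ?_⟩
    · intro σ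
      have := h1 σ
      have := hτ2 σ
      push_cast
      rw [map_mul, map_pow]
      positivity
    · intro σ
      have := h2 σ
      have := hτ2 σ
      push_cast
      rw [map_mul, map_pow]
      positivity
    · rw [hfac, h3]; ring
  · rintro ⟨τ₁, τ₂, h1, h2, hs, heq⟩
    apply hind
    refine ⟨β * τ₁ * τ, β * τ₂ * τ, ?_, ?_, ?_⟩
    · intro σ
      have hb := hβ σ
      have hn1 : σ (τ₁ : K) ≠ 0 := by
        simp [map_ne_zero, RingOfIntegers.coe_eq_zero_iff, h1]
      have hn2 : σ (τ₂ : K) ≠ 0 := by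
        simp [map_ne_zero, RingOfIntegers.coe_eq_zero_iff, h2]
      have hτeq : σ (τ : K) = σ (τ₁ : K) + σ (τ₂ : K) := by
        rw [heq]; push_cast; rw [map_add]
      push_cast
      rw [map_mul, map_mul, hτeq]
      rcases lt_or_gt_of_ne hn1 with hneg | hpos
      · have : ¬ (0 < σ (τ₂ : K)) := by
          rw [← hs σ]; linarith
        have h2' : σ (τ₂ : K) < 0 := lt_of_le_of_ne (le_of_not_gt this) hn2
        have hx : 0 < σ (τ₁ : K) * (σ (τ₁ : K) + σ (τ₂ : K)) := by nlinarith
        nlinarith [mul_pos hb hx]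
      · have h2' : 0 < σ (τ₂ : K) := (hs σ).mp hpos
        have hx : 0 < σ (τ₁ : K) * (σ (τ₁ : K) + σ (τ₂ : K)) := by nlinarith
        nlinarith [mul_pos hb hx]
    · intro σ
      have hb := hβ σ
      have hn1 : σ (τ₁ : K) ≠ 0 := by
        simp [map_ne_zero, RingOfIntegers.coe_eq_zero_iff, h1]
      have hn2 : σ (τ₂ : K) ≠ 0 := by
        simp [map_ne_zero, RingOfIntegers.coe_eq_zero_iff, h2]
      have hτeq : σ (τ : K) = σ (τ₁ : K) + σ (τ₂ : K) := by
        rw [heq]; push_cast; rw [map_add]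
      push_cast
      rw [map_mul, map_mul, hτeq]
      rcases lt_or_gt_of_ne hn1 with hneg | hpos
      · have : ¬ (0 < σ (τ₂ : K)) := by
          rw [← hs σ]; linarith
        have h2' : σ (τ₂ : K) < 0 := lt_of_le_of_ne (le_of_not_gt this) hn2
        have hx : 0 < σ (τ₂ : K) * (σ (τ₁ : K) + σ (τ₂ : K)) := by nlinarith
        nlinarith [mul_pos hb hx]
      · have h2' : 0 < σ (τ₂ : K) := (hs σ).mp hpos
        have hx : 0 < σ (τ₂ : K) * (σ (τ₁ : K) + σ (τ₂ : K)) := by nlinarith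
        nlinarith [mul_pos hb hx]
    · rw [hfac, heq]; ring
end

section
/- For all real numbers x₁, x₂, x₃, x₄ ∈ [−1, 1] one has |x₄−x₃|·|x₄−x₂|·|x₄−x₁|·|x₃−x₂|·|x₃−x₁|·|x₂−x₁| ≤ 2⁶·5^(−5/2), and this bound is attained: there exist x₁, x₂, x₃, x₄ ∈ [−1, 1] (namely −1, −1/√5, 1/√5, 1) for which equality holds. In other words, the maximum of the function g(x₁,x₂,x₃,x₄) = ∏_{1≤i<j≤4} |x_j − x_i| on [−1,1]⁴ equals 2⁶·5^(−5/2). -/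
private lemma rhs_eq : 2 ^ 6 * (5 : ℝ) ^ (-(5 : ℝ) / 2) = 64 * Real.sqrt 5 / 125 := by
  rw [show (-(5:ℝ)/2) = (1/2 : ℝ) + (-3 : ℝ) by norm_num,
    Real.rpow_add (by norm_num), ← Real.sqrt_eq_rpow,
    show ((-3:ℝ) = ((-3 : ℤ) : ℝ)) by norm_num, Real.rpow_intCast]
  norm_num
  ring

private lemma quintic (b : ℝ) (hb : 0 ≤ b) (hb2 : b ≤ 2) :
    125 * (b * (4 - b^2)^2) ≤ 512 * Real.sqrt 5 := by
  set s := Real.sqrt 5 with hs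
  have hs2 : s ^ 2 = 5 := Real.sq_sqrt (by norm_num)
  have hs0 : 0 < s := Real.sqrt_pos.mpr (by norm_num)
  have h2b : (0:ℝ) ≤ 2 - b := by linarith
  have key : 512*s - 125*(b*(4-b^2)^2) =
      (s*b-2)^2 * (16*s*(2-b)^3 + (35+48*s)*(b*(2-b)^2) + (70+38*s)*(b^2*(2-b)) + (10+6*s)*b^3) := by
    linear_combination (20*s*b^4 - 128*s*b^2 + 25*b^5 - 220*b^3 + 512*b) * hs2
  have hQ : 0 ≤ (s*b-2)^2 * (16*s*(2-b)^3 + (35+48*s)*(b*(2-b)^2) + (70+38*s)*(b^2*(2-b)) + (10+6*s)*b^3) := by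
    have h1 : (0:ℝ) ≤ 16*s*(2-b)^3 := by positivity
    have h2 : (0:ℝ) ≤ (35+48*s)*(b*(2-b)^2) := by positivity
    have h3 : (0:ℝ) ≤ (70+38*s)*(b^2*(2-b)) := by positivity
    have h4 : (0:ℝ) ≤ (10+6*s)*b^3 := by positivity
    exact mul_nonneg (sq_nonneg _) (by linarith)
  linarith

private lemma core (a b c : ℝ) (ha : 0 ≤ a) (hb : 0 ≤ b) (hc : 0 ≤ c)
    (h2 : a + b + c ≤ 2) :
    a * b * c * (a + b) * (b + c) * (a + b + c) ≤ 64 * Real.sqrt 5 / 125 := by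
  have hs0 : 0 < Real.sqrt 5 := Real.sqrt_pos.mpr (by norm_num)
  have quint := quintic b hb (by linarith)
  have hA : a * c ≤ ((a+c)/2)^2 := by nlinarith [sq_nonneg (a-c)]
  have hB : (a+b) * (b+c) ≤ ((a+c)/2 + b)^2 := by nlinarith [sq_nonneg (a-c)]
  have hAB : (a*c) * ((a+b)*(b+c)) ≤ ((a+c)/2)^2 * ((a+c)/2 + b)^2 :=
    mul_le_mul hA hB (by positivity) (by positivity)
  have hT : ((a+c)/2)^2 * ((a+c)/2 + b)^2 ≤ ((4-b^2)/4)^2 := by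
    have h1 : 0 ≤ (a+c)*((a+c)+2*b) := by positivity
    have h3 : (a+c)*((a+c)+2*b) ≤ 4 - b^2 := by nlinarith
    calc ((a+c)/2)^2 * ((a+c)/2 + b)^2 = ((a+c)*((a+c)+2*b)/4)^2 := by ring
      _ ≤ ((4-b^2)/4)^2 := by
          apply pow_le_pow_left₀ (by positivity)
          linarith
  calc a * b * c * (a + b) * (b + c) * (a + b + c)
      = ((a+b+c)*b) * ((a*c)*((a+b)*(b+c))) := by ring
    _ ≤ ((a+b+c)*b) * (((a+c)/2)^2 * ((a+c)/2 + b)^2) :=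
        mul_le_mul_of_nonneg_left hAB (by positivity)
    _ ≤ ((a+b+c)*b) * ((4-b^2)/4)^2 :=
        mul_le_mul_of_nonneg_left hT (by positivity)
    _ ≤ (2*b) * ((4-b^2)/4)^2 :=
        mul_le_mul_of_nonneg_right (by nlinarith) (by positivity)
    _ = (b * (4 - b^2)^2) / 8 := by ring
    _ ≤ 64 * Real.sqrt 5 / 125 := by linarith

private lemma key (y₁ y₂ y₃ y₄ : ℝ) (hm : -1 ≤ y₁) (hM : y₄ ≤ 1)
    (h12 : y₁ ≤ y₂) (h23 : y₂ ≤ y₃) (h34 : y₃ ≤ y₄) :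
    |y₄ - y₃| * |y₄ - y₂| * |y₄ - y₁| * |y₃ - y₂| * |y₃ - y₁| * |y₂ - y₁|
      ≤ 2 ^ 6 * (5 : ℝ) ^ (-(5 : ℝ) / 2) := by
  rw [rhs_eq,
    abs_of_nonneg (by linarith : (0:ℝ) ≤ y₄ - y₃),
    abs_of_nonneg (by linarith : (0:ℝ) ≤ y₄ - y₂),
    abs_of_nonneg (by linarith : (0:ℝ) ≤ y₄ - y₁),
    abs_of_nonneg (by linarith : (0:ℝ) ≤ y₃ - y₂),
    abs_of_nonneg (by linarith : (0:ℝ) ≤ y₃ - y₁),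
    abs_of_nonneg (by linarith : (0:ℝ) ≤ y₂ - y₁)]
  calc (y₄ - y₃) * (y₄ - y₂) * (y₄ - y₁) * (y₃ - y₂) * (y₃ - y₁) * (y₂ - y₁)
      = (y₂-y₁) * (y₃-y₂) * (y₄-y₃) * ((y₂-y₁) + (y₃-y₂)) * ((y₃-y₂) + (y₄-y₃))
        * ((y₂-y₁) + (y₃-y₂) + (y₄-y₃)) := by ring
    _ ≤ 64 * Real.sqrt 5 / 125 :=
        core _ _ _ (by linarith) (by linarith) (by linarith) (by linarith)

/-- The maximum of `∏_{1≤i<j≤4} |x_j − x_i|` over `[−1,1]⁴` equals `2⁶·5^(−5/2)`: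
the bound holds everywhere and is attained (at `−1, −1/√5, 1/√5, 1`). -/
theorem max_product_of_differences :
    (∀ x₁ x₂ x₃ x₄ : ℝ, x₁ ∈ Set.Icc (-1 : ℝ) 1 → x₂ ∈ Set.Icc (-1 : ℝ) 1 →
      x₃ ∈ Set.Icc (-1 : ℝ) 1 → x₄ ∈ Set.Icc (-1 : ℝ) 1 →
      |x₄ - x₃| * |x₄ - x₂| * |x₄ - x₁| * |x₃ - x₂| * |x₃ - x₁| * |x₂ - x₁|
        ≤ 2 ^ 6 * (5 : ℝ) ^ (-(5 : ℝ) / 2)) ∧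
    (∃ x₁ x₂ x₃ x₄ : ℝ, x₁ ∈ Set.Icc (-1 : ℝ) 1 ∧ x₂ ∈ Set.Icc (-1 : ℝ) 1 ∧
      x₃ ∈ Set.Icc (-1 : ℝ) 1 ∧ x₄ ∈ Set.Icc (-1 : ℝ) 1 ∧
      |x₄ - x₃| * |x₄ - x₂| * |x₄ - x₁| * |x₃ - x₂| * |x₃ - x₁| * |x₂ - x₁|
        = 2 ^ 6 * (5 : ℝ) ^ (-(5 : ℝ) / 2)) := by
  constructor
  · intro x₁ x₂ x₃ x₄ hx₁ hx₂ hx₃ hx₄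
    simp only [Set.mem_Icc] at hx₁ hx₂ hx₃ hx₄
    rcases le_total x₂ x₁ with h0 | h0
    ·
      rcases le_total x₃ x₂ with h1 | h1
      ·
        rcases le_total x₄ x₃ with h2 | h2
        ·
          exact le_of_eq_of_le (by simp only [abs_sub_comm]; try ring) (key x₄ x₃ x₂ x₁ hx₄.1 hx₁.2 (by linarith) (by linarith) (by linarith))
        ·
          rcases le_total x₄ x₂ with h3 | h3
          ·
            exact le_of_eq_of_le (by simp only [abs_sub_comm]; try ring) (key x₃ x₄ x₂ x₁ hx₃.1 hx₁.2 (by linarith) (by linarith) (by linarith))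
          ·
            rcases le_total x₄ x₁ with h4 | h4
            ·
              exact le_of_eq_of_le (by simp only [abs_sub_comm]; try ring) (key x₃ x₂ x₄ x₁ hx₃.1 hx₁.2 (by linarith) (by linarith) (by linarith))
            ·
              exact le_of_eq_of_le (by simp only [abs_sub_comm]; try ring) (key x₃ x₂ x₁ x₄ hx₃.1 hx₄.2 (by linarith) (by linarith) (by linarith))
      ·
        rcases le_total x₃ x₁ with h5 | h5
        ·
          rcases le_total x₄ x₂ with h6 | h6
          ·
            exact le_of_eq_of_le (by simp only [abs_sub_comm]; try ring) (key x₄ x₂ x₃ x₁ hx₄.1 hx₁.2 (by linarith) (by linarith) (by linarith))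
          ·
            rcases le_total x₄ x₃ with h7 | h7
            ·
              exact le_of_eq_of_le (by simp only [abs_sub_comm]; try ring) (key x₂ x₄ x₃ x₁ hx₂.1 hx₁.2 (by linarith) (by linarith) (by linarith))
            ·
              rcases le_total x₄ x₁ with h8 | h8
              ·
                exact le_of_eq_of_le (by simp only [abs_sub_comm]; try ring) (key x₂ x₃ x₄ x₁ hx₂.1 hx₁.2 (by linarith) (by linarith) (by linarith))
              ·
                exact le_of_eq_of_le (by simp only [abs_sub_comm]; try ring) (key x₂ x₃ x₁ x₄ hx₂.1 hx₄.2 (by linarith) (by linarith) (by linarith))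
        ·
          rcases le_total x₄ x₂ with h9 | h9
          ·
            exact le_of_eq_of_le (by simp only [abs_sub_comm]; try ring) (key x₄ x₂ x₁ x₃ hx₄.1 hx₃.2 (by linarith) (by linarith) (by linarith))
          ·
            rcases le_total x₄ x₁ with h10 | h10
            ·
              exact le_of_eq_of_le (by simp only [abs_sub_comm]; try ring) (key x₂ x₄ x₁ x₃ hx₂.1 hx₃.2 (by linarith) (by linarith) (by linarith))
            ·
              rcases le_total x₄ x₃ with h11 | h11
              ·
                exact le_of_eq_of_le (by simp only [abs_sub_comm]; try ring) (key x₂ x₁ x₄ x₃ hx₂.1 hx₃.2 (by linarith) (by linarith) (by linarith))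
              ·
                exact le_of_eq_of_le (by simp only [abs_sub_comm]; try ring) (key x₂ x₁ x₃ x₄ hx₂.1 hx₄.2 (by linarith) (by linarith) (by linarith))
    ·
      rcases le_total x₃ x₁ with h12 | h12
      ·
        rcases le_total x₄ x₃ with h13 | h13
        ·
          exact le_of_eq_of_le (by simp only [abs_sub_comm]; try ring) (key x₄ x₃ x₁ x₂ hx₄.1 hx₂.2 (by linarith) (by linarith) (by linarith))
        ·
          rcases le_total x₄ x₁ with h14 | h14
          ·
            exact le_of_eq_of_le (by simp only [abs_sub_comm]; try ring) (key x₃ x₄ x₁ x₂ hx₃.1 hx₂.2 (by linarith) (by linarith) (by linarith))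
          ·
            rcases le_total x₄ x₂ with h15 | h15
            ·
              exact le_of_eq_of_le (by simp only [abs_sub_comm]; try ring) (key x₃ x₁ x₄ x₂ hx₃.1 hx₂.2 (by linarith) (by linarith) (by linarith))
            ·
              exact le_of_eq_of_le (by simp only [abs_sub_comm]; try ring) (key x₃ x₁ x₂ x₄ hx₃.1 hx₄.2 (by linarith) (by linarith) (by linarith))
      ·
        rcases le_total x₃ x₂ with h16 | h16
        ·
          rcases le_total x₄ x₁ with h17 | h17
          ·
            exact le_of_eq_of_le (by simp only [abs_sub_comm]; try ring) (key x₄ x₁ x₃ x₂ hx₄.1 hx₂.2 (by linarith) (by linarith) (by linarith))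
          ·
            rcases le_total x₄ x₃ with h18 | h18
            ·
              exact le_of_eq_of_le (by simp only [abs_sub_comm]; try ring) (key x₁ x₄ x₃ x₂ hx₁.1 hx₂.2 (by linarith) (by linarith) (by linarith))
            ·
              rcases le_total x₄ x₂ with h19 | h19
              ·
                exact le_of_eq_of_le (by simp only [abs_sub_comm]; try ring) (key x₁ x₃ x₄ x₂ hx₁.1 hx₂.2 (by linarith) (by linarith) (by linarith))
              ·
                exact le_of_eq_of_le (by simp only [abs_sub_comm]; try ring) (key x₁ x₃ x₂ x₄ hx₁.1 hx₄.2 (by linarith) (by linarith) (by linarith))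
        ·
          rcases le_total x₄ x₁ with h20 | h20
          ·
            exact le_of_eq_of_le (by simp only [abs_sub_comm]; try ring) (key x₄ x₁ x₂ x₃ hx₄.1 hx₃.2 (by linarith) (by linarith) (by linarith))
          ·
            rcases le_total x₄ x₂ with h21 | h21
            ·
              exact le_of_eq_of_le (by simp only [abs_sub_comm]; try ring) (key x₁ x₄ x₂ x₃ hx₁.1 hx₃.2 (by linarith) (by linarith) (by linarith))
            ·
              rcases le_total x₄ x₃ with h22 | h22
              ·
                exact le_of_eq_of_le (by simp only [abs_sub_comm]; try ring) (key x₁ x₂ x₄ x₃ hx₁.1 hx₃.2 (by linarith) (by linarith) (by linarith))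
              ·
                exact le_of_eq_of_le (by simp only [abs_sub_comm]; try ring) (key x₁ x₂ x₃ x₄ hx₁.1 hx₄.2 (by linarith) (by linarith) (by linarith))
  · set s := Real.sqrt 5 with hsdef
    have hs2 : s ^ 2 = 5 := Real.sq_sqrt (by norm_num)
    have hs0 : 0 < s := Real.sqrt_pos.mpr (by norm_num)
    have hs1 : 1 ≤ s := by nlinarith
    have hinv : 1/s ≤ 1 := by
      rw [div_le_one hs0]; exact hs1
    have hinv0 : 0 < 1/s := by positivity
    refine ⟨-1, -(1/s), 1/s, 1, ?_, ?_, ?_, ?_, ?_⟩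
    · simp
    · constructor <;> [linarith; linarith]
    · constructor <;> [linarith; linarith]
    · simp
    · rw [rhs_eq,
        abs_of_nonneg (by linarith : (0:ℝ) ≤ 1 - 1/s),
        abs_of_nonneg (by linarith : (0:ℝ) ≤ 1 - -(1/s)),
        abs_of_nonneg (by norm_num : (0:ℝ) ≤ 1 - (-1)),
        abs_of_nonneg (by linarith : (0:ℝ) ≤ 1/s - -(1/s)),
        abs_of_nonneg (by linarith : (0:ℝ) ≤ 1/s - (-1)),
        abs_of_nonneg (by linarith : (0:ℝ) ≤ -(1/s) - (-1))]
      have hne : s ≠ 0 := ne_of_gt hs0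
      field_simp
      have hs4 : s ^ 4 = 25 := by
        rw [show (4:ℕ) = 2*2 from rfl, pow_mul, hs2]; norm_num
      have hs6 : s ^ 6 = 125 := by
        rw [show (6:ℕ) = 2*3 from rfl, pow_mul, hs2]; norm_num
      ring_nf
      linarith [hs2, hs4, hs6]
end
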